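/- arXiv:1501.06836 — 2 statements merged into one kernel-verified Lean document; each statement's English description precedes it below -/
import Mathlib

section
/- Let f, h : ℝ → ℝ be continuous with f positive nondecreasing and h nonnegative nonincreasing, and define R(a) = ∫_a^∞ dt / (∫_a^t exp(-2∫_s^t h(r) dr) f(s) ds)^{1/2} ∈ (0, +∞]. If R(a₀) < +∞ for some a₀ ∈ ℝ, then R(a) < +∞ for every a ∈ ℝ. -/
/-!
Write `ψ_a(t) = ∫_a^t k(s, t) ds` with `k(s, t) = exp(-2∫_s^t h) f(s)`. Since `h ≥ 0` and `f` is
positive nondecreasing, `k` is positive, nondecreasing in `s` and nonincreasing in `t`. Hence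
`ψ_a(t) ≥ k(a, t) (t - a) ≥ k(a, T) (t - a)` on any `(a, T]`, so `ψ_a^{-1/2}` is integrable
near `a`. Far out, the extra piece `∫_{a₀}^a k(s, t) ds ≤ k(a, t) (a - a₀)` of `ψ_{a₀}(t)` is dominated
by `k(a, t) (t - a) ≤ ψ_a(t)`, so `ψ_{a₀}(t) ≤ 2 ψ_a(t)` and `R(a)` is controlled by `R(a₀)`.
-/

open Real MeasureTheory Set Filter

section MonotoneIntegral

variable {g : ℝ → ℝ}

theorem Monotone.mul_sub_le_integral (hg : Monotone g) {a t : ℝ} (hat : a ≤ t) :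
    g a * (t - a) ≤ ∫ s in a..t, g s := by
  have := intervalIntegral.integral_mono_on (μ := volume) hat intervalIntegrable_const
    hg.intervalIntegrable fun s hs => hg hs.1
  rwa [intervalIntegral.integral_const, smul_eq_mul, mul_comm] at this

theorem Monotone.integral_le_mul_sub (hg : Monotone g) {b a : ℝ} (hba : b ≤ a) :
    ∫ s in b..a, g s ≤ g a * (a - b) := by
  have := intervalIntegral.integral_mono_on (μ := volume) hba hg.intervalIntegrable
    intervalIntegrable_const fun s hs => hg hs.2
  rwa [intervalIntegral.integral_const, smul_eq_mul, mul_comm] at this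

theorem Monotone.integral_le_two_mul_integral (hg : Monotone g) (hg₀ : ∀ s, 0 ≤ g s)
    {a b t : ℝ} (hat : a ≤ t) (hab : a - b ≤ t - a) :
    ∫ s in b..t, g s ≤ 2 * ∫ s in a..t, g s := by
  rw [← intervalIntegral.integral_add_adjacent_intervals (b := a) hg.intervalIntegrable
    hg.intervalIntegrable]
  have hlow := hg.mul_sub_le_integral hat
  have hhead : ∫ s in b..a, g s ≤ g a * (t - a) := by
    rcases le_total b a with hba | hab'
    · exact (hg.integral_le_mul_sub hba).trans (mul_le_mul_of_nonneg_left hab (hg₀ a))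
    · rw [intervalIntegral.integral_symm]
      have := intervalIntegral.integral_nonneg (μ := volume) hab' fun s _ => hg₀ s
      have := mul_nonneg (hg₀ a) (sub_nonneg.2 hat)
      linarith
  linarith

end MonotoneIntegral

section IntegralOfNonneg

variable {h : ℝ → ℝ}

theorem antitone_integral_left (hh₀ : ∀ r, 0 ≤ h r)
    (hint : ∀ u v, IntervalIntegrable h volume u v) (t : ℝ) :
    Antitone fun s => ∫ r in s..t, h r := by
  intro s s' hss'
  simp only
  rw [← intervalIntegral.integral_add_adjacent_intervals (hint s s') (hint s' t)]
  have := intervalIntegral.integral_nonneg (μ := volume) hss' fun r _ => hh₀ r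
  linarith

theorem monotone_integral_right (hh₀ : ∀ r, 0 ≤ h r)
    (hint : ∀ u v, IntervalIntegrable h volume u v) (s : ℝ) :
    Monotone fun t => ∫ r in s..t, h r := by
  intro t t' htt'
  simp only
  rw [← intervalIntegral.integral_add_adjacent_intervals (hint s t) (hint t t')]
  have := intervalIntegral.integral_nonneg (μ := volume) htt' fun r _ => hh₀ r
  linarith

end IntegralOfNonneg

section OneDivRpow

variable {p : ℝ}

theorem one_div_rpow_le_mul_one_div_rpow {x y C : ℝ} (hx : 0 < x) (hC : 0 < C)
    (hxy : x ≤ C * y) (hp : 0 ≤ p) : 1 / y ^ p ≤ C ^ p * (1 / x ^ p) := by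
  have hy : 0 < y := pos_of_mul_pos_right (hx.trans_le hxy) hC.le
  rw [mul_one_div, div_le_div_iff₀ (rpow_pos_of_pos hy p) (rpow_pos_of_pos hx p), one_mul,
    ← mul_rpow hC.le hy.le]
  exact rpow_le_rpow hx.le hxy hp

theorem lintegral_one_div_rpow_le_of_le_mul {φ ψ : ℝ → ℝ} {s : Set ℝ} (hs : MeasurableSet s)
    {C : ℝ} (hC : 0 < C) (hp : 0 ≤ p) (hφ : ∀ t ∈ s, 0 < φ t) (hφψ : ∀ t ∈ s, φ t ≤ C * ψ t) :
    ∫⁻ t in s, ENNReal.ofReal (1 / ψ t ^ p)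
      ≤ ENNReal.ofReal (C ^ p) * ∫⁻ t in s, ENNReal.ofReal (1 / φ t ^ p) := by
  rw [← lintegral_const_mul' _ _ ENNReal.ofReal_ne_top]
  refine setLIntegral_mono' hs fun t ht => ?_
  rw [← ENNReal.ofReal_mul (rpow_nonneg hC.le p)]
  exact ENNReal.ofReal_le_ofReal
    (one_div_rpow_le_mul_one_div_rpow (hφ t ht) hC (hφψ t ht) hp)

theorem lintegral_Ioc_one_div_rpow_lt_top_of_linear_le {ψ : ℝ → ℝ} {a T c : ℝ}
    (hp₀ : 0 ≤ p) (hp₁ : p < 1) (hc : 0 < c) (hψ : ∀ t ∈ Ioc a T, c * (t - a) ≤ ψ t) :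
    ∫⁻ t in Ioc a T, ENNReal.ofReal (1 / ψ t ^ p) < ⊤ := by
  have hbound : ∀ t ∈ Ioc a T, ENNReal.ofReal (1 / ψ t ^ p)
      ≤ ENNReal.ofReal (c ^ (-p) * (t - a) ^ (-p)) := by
    intro t ht
    have hta : 0 < c * (t - a) := mul_pos hc (sub_pos.2 ht.1)
    refine ENNReal.ofReal_le_ofReal ?_
    calc 1 / ψ t ^ p ≤ 1 / (c * (t - a)) ^ p :=
          one_div_le_one_div_of_le (rpow_pos_of_pos hta p) (rpow_le_rpow hta.le (hψ t ht) hp₀)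
      _ = c ^ (-p) * (t - a) ^ (-p) := by
          rw [one_div, ← rpow_neg hta.le, mul_rpow hc.le (sub_pos.2 ht.1).le]
  have hint : IntervalIntegrable (fun t => c ^ (-p) * (t - a) ^ (-p)) volume a T := by
    have := (intervalIntegral.intervalIntegrable_rpow' (a := a - a) (b := T - a)
      (neg_lt_neg hp₁)).comp_sub_right a
    simpa using this.const_mul (c ^ (-p))
  exact (setLIntegral_mono' measurableSet_Ioc hbound).trans_lt hint.1.lintegral_lt_top

end OneDivRpow

theorem lintegral_one_div_rpow_integral_lt_top_of_lt_top {k : ℝ → ℝ → ℝ} {p a₀ : ℝ}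
    (hk : ∀ s t, 0 < k s t) (hk_left : ∀ t, Monotone fun s => k s t)
    (hk_right : ∀ s, Antitone (k s)) (hp₀ : 0 ≤ p) (hp₁ : p < 1)
    (hfin : ∫⁻ t in Ioi a₀, ENNReal.ofReal (1 / (∫ s in a₀..t, k s t) ^ p) < ⊤) (a : ℝ) :
    ∫⁻ t in Ioi a, ENNReal.ofReal (1 / (∫ s in a..t, k s t) ^ p) < ⊤ := by
  have hlow : ∀ b t, b ≤ t → k b t * (t - b) ≤ ∫ s in b..t, k s t :=
    fun b t hbt => (hk_left t).mul_sub_le_integral hbt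
  -- chosen so that every `t > T` has `a₀ < t` and `a - a₀ ≤ t - a`
  set T := max a₀ (2 * a - a₀)
  have haT : a ≤ T := le_max_iff.2 <| (le_total a a₀).imp id fun h => by linarith
  have hnear : ∫⁻ t in Ioc a T, ENNReal.ofReal (1 / (∫ s in a..t, k s t) ^ p) < ⊤ :=
    lintegral_Ioc_one_div_rpow_lt_top_of_linear_le hp₀ hp₁ (hk a T) fun t ht =>
      (mul_le_mul_of_nonneg_right (hk_right a ht.2) (sub_nonneg.2 ht.1.le)).trans
        (hlow a t ht.1.le)
  have hfar : ∫⁻ t in Ioi T, ENNReal.ofReal (1 / (∫ s in a..t, k s t) ^ p)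
      ≤ ENNReal.ofReal (2 ^ p)
        * ∫⁻ t in Ioi T, ENNReal.ofReal (1 / (∫ s in a₀..t, k s t) ^ p) := by
    refine lintegral_one_div_rpow_le_of_le_mul measurableSet_Ioi two_pos hp₀ (fun t ht => ?_)
      fun t ht => ?_
    · have ha₀t : a₀ < t := (le_max_left _ _).trans_lt ht
      exact (mul_pos (hk a₀ t) (sub_pos.2 ha₀t)).trans_le (hlow a₀ t ha₀t.le)
    · have : 2 * a - a₀ < t := (le_max_right _ _).trans_lt ht
      exact (hk_left t).integral_le_two_mul_integral (fun s => (hk s t).le) (haT.trans ht.le)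
        (by linarith)
  have hfar_fin : ∫⁻ t in Ioi T, ENNReal.ofReal (1 / (∫ s in a₀..t, k s t) ^ p) < ⊤ :=
    (lintegral_mono_set (Ioi_subset_Ioi (le_max_left _ _))).trans_lt hfin
  calc ∫⁻ t in Ioi a, ENNReal.ofReal (1 / (∫ s in a..t, k s t) ^ p)
      ≤ (∫⁻ t in Ioc a T, ENNReal.ofReal (1 / (∫ s in a..t, k s t) ^ p))
        + ∫⁻ t in Ioi T, ENNReal.ofReal (1 / (∫ s in a..t, k s t) ^ p) := by
        rw [← Ioc_union_Ioi_eq_Ioi haT]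
        exact lintegral_union_le _ _ _
    _ < ⊤ := ENNReal.add_lt_top.2
        ⟨hnear, hfar.trans_lt (ENNReal.mul_lt_top ENNReal.ofReal_lt_top hfar_fin)⟩

theorem stmt13_general (f h : ℝ → ℝ)
    (hfpos : ∀ t, 0 < f t) (hfmono : Monotone f)
    (hhnonneg : ∀ t, 0 ≤ h t) (hhanti : Antitone h)
    (Rfun : ℝ → ENNReal)
    (hRfun : ∀ a, Rfun a = ∫⁻ t in Set.Ioi a,
      ENNReal.ofReal
        (1 / (∫ s in a..t, Real.exp (-2 * ∫ r in s..t, h r) * f s) ^ ((1 : ℝ) / 2)))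
    (a₀ : ℝ) (hfin : Rfun a₀ < ⊤) :
    ∀ a : ℝ, Rfun a < ⊤ := by
  intro a
  have hint : ∀ u v, IntervalIntegrable h volume u v := fun _ _ => hhanti.intervalIntegrable
  rw [hRfun] at hfin ⊢
  refine lintegral_one_div_rpow_integral_lt_top_of_lt_top
    (k := fun s t => exp (-2 * ∫ r in s..t, h r) * f s)
    (fun s t => mul_pos (exp_pos _) (hfpos s)) (fun t => ?_) (fun s => ?_) (by norm_num)
    (by norm_num) hfin a
  · exact (exp_monotone.comp ((antitone_integral_left hhnonneg hint t).const_mul_of_nonpos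
      (by norm_num))).mul hfmono (fun _ => (exp_pos _).le) fun s => (hfpos s).le
  · exact (exp_monotone.comp_antitone
      ((monotone_integral_right hhnonneg hint s).const_mul_of_nonpos (by norm_num))).mul_const
      (hfpos s).le

theorem stmt13 (f h : ℝ → ℝ)
    (hf : Continuous f) (hfpos : ∀ t, 0 < f t) (hfmono : Monotone f)
    (hh : Continuous h) (hhnonneg : ∀ t, 0 ≤ h t) (hhanti : Antitone h)
    (Rfun : ℝ → ENNReal)
    (hRfun : ∀ a, Rfun a = ∫⁻ t in Set.Ioi a,
      ENNReal.ofReal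
        (1 / (∫ s in a..t, Real.exp (-2 * ∫ r in s..t, h r) * f s) ^ ((1 : ℝ) / 2)))
    (a₀ : ℝ) (hfin : Rfun a₀ < ⊤) :
    ∀ a : ℝ, Rfun a < ⊤ :=
  stmt13_general f h hfpos hfmono hhnonneg hhanti Rfun hRfun a₀ hfin
end

section
/- Let f, h : ℝ → ℝ be continuous with f positive nondecreasing and h nonnegative nonincreasing, and define R(a) = ∫_a^∞ dt / (∫_a^t exp(-2∫_s^t h(r) dr) f(s) ds)^{1/2}. If R(a) < +∞ for every a, then R is nonincreasing in a and lim_{a→+∞} R(a) = 0. -/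
/-!
After the substitution `t ↦ t + a`, `R(a) = ∫_0^∞ φ_a(t) dt` with
`φ_a(t) = (∫_0^t exp(-2∫_σ^t h(ρ + a) dρ) f(σ + a) dσ)^{-1/2}`. Since `f` is nondecreasing and `h`
nonincreasing, `φ_a(t)` is nonincreasing in `a`, hence so is `R`. If `f` were bounded by `B`, then
(as `h ≥ 0`) the inner integral in `R(0)` would be at most `B t`, and `R(0) ≥ ∫_0^∞ (B t)^{-1/2} dt = ∞`.
So `f → ∞`, and the bound `φ_a(t) ≤ (f(a) ∫_0^t exp(-2∫_σ^t h))^{-1/2}` (for `a ≥ 0`) sends `φ_a(t) → 0`;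
dominated convergence (by `φ_0`, integrable as `R(0) < ∞`) gives `R(a) → 0`.
-/

open Real MeasureTheory Set Filter
open scoped ENNReal Topology

theorem continuous_intervalIntegral_of_bounds {X : Type*} [TopologicalSpace X] {h : ℝ → ℝ}
    (hh : Continuous h) {u v : X → ℝ} (hu : Continuous u) (hv : Continuous v) :
    Continuous fun x => ∫ r in u x..v x, h r := by
  have hsplit : ∀ x, ∫ r in u x..v x, h r = (∫ r in 0..v x, h r) - ∫ r in 0..u x, h r :=
    fun x => (intervalIntegral.integral_interval_sub_left (hh.intervalIntegrable _ _)
      (hh.intervalIntegrable _ _)).symm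
  simp_rw [hsplit]
  fun_prop

theorem ofReal_one_div_rpow_half_le {x y : ℝ} (hx : 0 < x) (hxy : x ≤ y) :
    ENNReal.ofReal (1 / y ^ (1 / 2 : ℝ)) ≤ ENNReal.ofReal (1 / x ^ (1 / 2 : ℝ)) :=
  ENNReal.ofReal_le_ofReal <| one_div_le_one_div_of_le (rpow_pos_of_pos hx _)
    (rpow_le_rpow hx.le hxy (by norm_num))

theorem setLIntegral_Ioi_one_div_sqrt_mul_eq_top {B : ℝ} (hB : 0 < B) :
    ∫⁻ t in Ioi 0, ENNReal.ofReal (1 / (B * t) ^ (1 / 2 : ℝ)) = ⊤ := by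
  by_contra hfin
  have hint : IntegrableOn (fun t : ℝ => 1 / (B * t) ^ (1 / 2 : ℝ)) (Ioi 0) :=
    (lintegral_ofReal_ne_top_iff_integrable (by fun_prop : Measurable _).aestronglyMeasurable
      (ae_restrict_of_forall_mem measurableSet_Ioi fun t ht => by
        have : 0 < B * t := mul_pos hB ht
        positivity)).1 hfin
  refine not_integrableOn_Ioi_rpow (-(1 / 2)) <|
    IntegrableOn.congr_fun (hint.const_mul (B ^ (1 / 2 : ℝ))) (fun t ht => ?_) measurableSet_Ioi
  rw [mul_rpow hB.le (le_of_lt ht), rpow_neg (le_of_lt ht)]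
  have hsqrtB : 0 < B ^ (1 / 2 : ℝ) := rpow_pos_of_pos hB _
  field_simp

theorem setLIntegral_Ioi_eq_comp_add_right (g : ℝ → ℝ≥0∞) (a : ℝ) :
    ∫⁻ t in Ioi a, g t = ∫⁻ t in Ioi 0, g (t + a) := by
  rw [← (measurePreserving_add_right volume a).setLIntegral_comp_preimage_emb
    (measurableEmbedding_addRight a), preimage_add_const_Ioi, sub_self]

noncomputable def dampedIntegral (f h : ℝ → ℝ) (a t : ℝ) : ℝ :=
  ∫ s in a..t, exp (-2 * ∫ r in s..t, h r) * f s

section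

variable {f g h : ℝ → ℝ}

theorem continuous_dampedIntegrand (hf : Continuous f) (hh : Continuous h) (t : ℝ) :
    Continuous fun s => exp (-2 * ∫ r in s..t, h r) * f s := by
  have := continuous_intervalIntegral_of_bounds hh continuous_id (continuous_const (y := t))
  fun_prop

theorem continuous_dampedIntegral (hf : Continuous f) (hh : Continuous h) (a : ℝ) :
    Continuous (dampedIntegral f h a) := by
  have := continuous_intervalIntegral_of_bounds hh continuous_snd continuous_fst
  exact intervalIntegral.continuous_parametric_intervalIntegral_of_continuous
    (by fun_prop) continuous_id

theorem dampedIntegral_pos (hf : Continuous f) (hh : Continuous h) (hfpos : ∀ s, 0 < f s)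
    {a t : ℝ} (hat : a < t) : 0 < dampedIntegral f h a t :=
  intervalIntegral.intervalIntegral_pos_of_pos_on
    ((continuous_dampedIntegrand hf hh t).intervalIntegrable a t)
    (fun s _ => mul_pos (exp_pos _) (hfpos s)) hat

theorem dampedIntegral_le_mul_sub (hf : Continuous f) (hh : Continuous h)
    (hf0 : ∀ s, 0 ≤ f s) (hh0 : ∀ r, 0 ≤ h r) {B a t : ℝ} (hB : ∀ s, f s ≤ B) (hat : a ≤ t) :
    dampedIntegral f h a t ≤ B * (t - a) := by
  calc dampedIntegral f h a t ≤ ∫ _ in a..t, B :=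
        intervalIntegral.integral_mono_on hat
          ((continuous_dampedIntegrand hf hh t).intervalIntegrable a t) intervalIntegrable_const
          fun s hs => ?_
    _ = B * (t - a) := by simp [mul_comm]
  have hexp : exp (-2 * ∫ r in s..t, h r) ≤ 1 := by
    have : 0 ≤ ∫ r in s..t, h r := intervalIntegral.integral_nonneg hs.2 fun r _ => hh0 r
    rw [exp_le_one_iff]
    linarith
  calc exp (-2 * ∫ r in s..t, h r) * f s ≤ 1 * f s := mul_le_mul_of_nonneg_right hexp (hf0 s)
    _ ≤ B := by simpa using hB s

theorem dampedIntegral_add_right (f h : ℝ → ℝ) (a t : ℝ) :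
    dampedIntegral f h a (t + a) =
      ∫ s in 0..t, exp (-2 * ∫ r in s..t, h (r + a)) * f (s + a) := by
  simp only [intervalIntegral.integral_comp_add_right h]
  rw [intervalIntegral.integral_comp_add_right
    (fun s => exp (-2 * ∫ r in s..t + a, h r) * f s), zero_add]
  rfl

theorem dampedIntegral_le_dampedIntegral_of_le_shift (hf : Continuous f) (hg : Continuous g)
    (hh : Continuous h) (hhanti : Antitone h) (hg0 : ∀ s, 0 ≤ g s) {a b t : ℝ} (hab : a ≤ b)
    (ht : 0 ≤ t) (hgf : ∀ s ∈ Icc 0 t, g (s + a) ≤ f (s + b)) :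
    dampedIntegral g h a (t + a) ≤ dampedIntegral f h b (t + b) := by
  rw [dampedIntegral_add_right, dampedIntegral_add_right]
  have hcont : ∀ {k : ℝ → ℝ} (c : ℝ), Continuous k →
      Continuous fun s => exp (-2 * ∫ r in s..t, h (r + c)) * k (s + c) := fun c hk =>
    continuous_dampedIntegrand (hk.comp (continuous_add_const c))
      (hh.comp (continuous_add_const c)) t
  refine intervalIntegral.integral_mono_on ht ((hcont a hg).intervalIntegrable 0 t)
    ((hcont b hf).intervalIntegrable 0 t) fun s hs => ?_
  have hdecay : ∫ r in s..t, h (r + b) ≤ ∫ r in s..t, h (r + a) :=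
    intervalIntegral.integral_mono_on hs.2
      ((hh.comp (continuous_add_const b)).intervalIntegrable s t)
      ((hh.comp (continuous_add_const a)).intervalIntegrable s t)
      fun r _ => hhanti (by linarith)
  exact mul_le_mul (exp_le_exp.2 (by linarith)) (hgf s hs) (hg0 _) (exp_pos _).le

theorem dampedIntegral_add_right_mono (hf : Continuous f) (hh : Continuous h)
    (hhanti : Antitone h) (hf0 : ∀ s, 0 ≤ f s) (hfmono : Monotone f) {a b t : ℝ} (hab : a ≤ b)
    (ht : 0 ≤ t) : dampedIntegral f h a (t + a) ≤ dampedIntegral f h b (t + b) :=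
  dampedIntegral_le_dampedIntegral_of_le_shift hf hf hh hhanti hf0 hab ht fun _ _ =>
    hfmono (by linarith)

theorem mul_le_dampedIntegral_add_right (hf : Continuous f) (hh : Continuous h)
    (hhanti : Antitone h) (hf0 : ∀ s, 0 ≤ f s) (hfmono : Monotone f) {a t : ℝ} (ha : 0 ≤ a)
    (ht : 0 ≤ t) : dampedIntegral (fun _ => 1) h 0 t * f a ≤ dampedIntegral f h a (t + a) := by
  have hconst :
      dampedIntegral (fun _ => f a) h 0 t = dampedIntegral (fun _ => 1) h 0 t * f a := by
    simp only [dampedIntegral, mul_one, intervalIntegral.integral_mul_const]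
  have := dampedIntegral_le_dampedIntegral_of_le_shift hf continuous_const hh hhanti
    (fun _ => hf0 a) ha ht fun s hs => hfmono (by linarith [hs.1])
  rwa [add_zero, hconst] at this

theorem setLIntegral_dampedIntegral_eq_top_of_bddAbove (hf : Continuous f) (hh : Continuous h)
    (hfpos : ∀ s, 0 < f s) (hh0 : ∀ r, 0 ≤ h r) (hbdd : BddAbove (range f)) :
    ∫⁻ t in Ioi 0, ENNReal.ofReal (1 / dampedIntegral f h 0 t ^ (1 / 2 : ℝ)) = ⊤ := by
  obtain ⟨B, hB⟩ := hbdd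
  have hfB : ∀ s, f s ≤ B := fun s => hB (mem_range_self s)
  refine eq_top_mono (setLIntegral_mono' measurableSet_Ioi fun t ht => ?_)
    (setLIntegral_Ioi_one_div_sqrt_mul_eq_top ((hfpos 0).trans_le (hfB 0)))
  have hle := dampedIntegral_le_mul_sub hf hh (fun s => (hfpos s).le) hh0 hfB (le_of_lt ht)
  rw [sub_zero] at hle
  exact ofReal_one_div_rpow_half_le (dampedIntegral_pos hf hh hfpos ht) hle

noncomputable def shiftedIntegrand (f h : ℝ → ℝ) (a t : ℝ) : ℝ≥0∞ :=
  ENNReal.ofReal (1 / dampedIntegral f h a (t + a) ^ (1 / 2 : ℝ))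

theorem measurable_shiftedIntegrand (hf : Continuous f) (hh : Continuous h) (a : ℝ) :
    Measurable (shiftedIntegrand f h a) := by
  have := continuous_dampedIntegral hf hh a
  unfold shiftedIntegrand
  fun_prop

theorem antitone_shiftedIntegrand (hf : Continuous f) (hh : Continuous h) (hhanti : Antitone h)
    (hfpos : ∀ s, 0 < f s) (hfmono : Monotone f) {t : ℝ} (ht : 0 < t) :
    Antitone fun a => shiftedIntegrand f h a t := fun a _ hab =>
  ofReal_one_div_rpow_half_le (dampedIntegral_pos hf hh hfpos (by linarith))
    (dampedIntegral_add_right_mono hf hh hhanti (fun s => (hfpos s).le) hfmono hab ht.le)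

theorem tendsto_shiftedIntegrand_atTop (hf : Continuous f) (hh : Continuous h)
    (hhanti : Antitone h) (hfpos : ∀ s, 0 < f s) (hfmono : Monotone f)
    (hftop : Tendsto f atTop atTop) {t : ℝ} (ht : 0 < t) :
    Tendsto (fun a => shiftedIntegrand f h a t) atTop (𝓝 0) := by
  have hc : 0 < dampedIntegral (fun _ => 1) h 0 t :=
    dampedIntegral_pos continuous_const hh (fun _ => one_pos) ht
  have hlower : Tendsto (fun a => dampedIntegral (fun _ => 1) h 0 t * f a) atTop atTop :=
    hftop.const_mul_atTop hc
  have hsmall : Tendsto (fun a => ENNReal.ofReal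
      (1 / (dampedIntegral (fun _ => 1) h 0 t * f a) ^ (1 / 2 : ℝ))) atTop (𝓝 0) := by
    rw [← ENNReal.ofReal_zero]
    refine ENNReal.tendsto_ofReal ?_
    simpa only [one_div, Function.comp_def] using
      tendsto_inv_atTop_zero.comp ((tendsto_rpow_atTop (by norm_num)).comp hlower)
  refine tendsto_of_tendsto_of_tendsto_of_le_of_le' tendsto_const_nhds hsmall
    (Eventually.of_forall fun _ => zero_le) ?_
  filter_upwards [eventually_ge_atTop 0] with a ha
  exact ofReal_one_div_rpow_half_le (mul_pos hc (hfpos a))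
    (mul_le_dampedIntegral_add_right hf hh hhanti (fun s => (hfpos s).le) hfmono ha ht.le)

theorem tendsto_setLIntegral_shiftedIntegrand_atTop (hf : Continuous f) (hh : Continuous h)
    (hhanti : Antitone h) (hfpos : ∀ s, 0 < f s) (hfmono : Monotone f)
    (hftop : Tendsto f atTop atTop) (hfin : ∫⁻ t in Ioi 0, shiftedIntegrand f h 0 t ≠ ⊤) :
    Tendsto (fun a => ∫⁻ t in Ioi 0, shiftedIntegrand f h a t) atTop (𝓝 0) := by
  simpa only [lintegral_zero] using tendsto_lintegral_filter_of_dominated_convergence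
    (shiftedIntegrand f h 0) (Eventually.of_forall (measurable_shiftedIntegrand hf hh))
    ((eventually_ge_atTop 0).mono fun a ha => ae_restrict_of_forall_mem measurableSet_Ioi
      fun t ht => antitone_shiftedIntegrand hf hh hhanti hfpos hfmono ht ha)
    hfin (ae_restrict_of_forall_mem measurableSet_Ioi fun t ht =>
      tendsto_shiftedIntegrand_atTop hf hh hhanti hfpos hfmono hftop ht)

end

theorem stmt14 (f h : ℝ → ℝ)
    (hf : Continuous f) (hfpos : ∀ t, 0 < f t) (hfmono : Monotone f)
    (hh : Continuous h) (hhnonneg : ∀ t, 0 ≤ h t) (hhanti : Antitone h)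
    (Rfun : ℝ → ENNReal)
    (hRfun : ∀ a, Rfun a = ∫⁻ t in Set.Ioi a,
      ENNReal.ofReal
        (1 / (∫ s in a..t, Real.exp (-2 * ∫ r in s..t, h r) * f s) ^ ((1 : ℝ) / 2)))
    (hfin : ∀ a, Rfun a < ⊤) :
    Antitone Rfun ∧ Filter.Tendsto Rfun Filter.atTop (nhds 0) := by
  have hR : ∀ a, Rfun a = ∫⁻ t in Ioi 0, shiftedIntegrand f h a t := fun a => by
    rw [hRfun, setLIntegral_Ioi_eq_comp_add_right]
    rfl
  refine ⟨fun a b hab => ?_, ?_⟩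
  · rw [hR, hR]
    exact setLIntegral_mono' measurableSet_Ioi fun t ht =>
      antitone_shiftedIntegrand hf hh hhanti hfpos hfmono ht hab
  have hunbdd : ¬BddAbove (range f) := fun hbdd => (hfin 0).ne <| by
    rw [hRfun]
    exact setLIntegral_dampedIntegral_eq_top_of_bddAbove hf hh hfpos hhnonneg hbdd
  rw [funext hR]
  exact tendsto_setLIntegral_shiftedIntegrand_atTop hf hh hhanti hfpos hfmono
    (tendsto_atTop_atTop_of_monotone' hfmono hunbdd) (hR 0 ▸ (hfin 0).ne)
end
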